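/- Let K ⊆ ℝ^d have diameter at most D, let f : ℝ^d → ℝ be L-smooth, let w_1,…,w_T ∈ K with anytime averages x_t = (Σ_{i=1}^t i·w_i)/(t(t+1)/2) for weights α_t = t, let τ_1,…,τ_T be integers with 0 ≤ τ_t ≤ t − 1, and let ξ_1,…,ξ_T ∈ ℝ^d be arbitrary vectors. Then for every t with 2 ≤ t ≤ T, ‖(∇f(x_{t−1−τ_{t−1}}) + ξ_{t−1}) − (∇f(x_{t−τ_t}) + ξ_t)‖ ≤ 2·L·D/(t−1) + 8·L·D·τ_{t−1}/(t−1) + 8·L·D·τ_t/t + ‖ξ_t‖ + ‖ξ_{t−1}‖. -/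

import Mathlib

/-!
The weighted averages move slowly: with `A_t = t(t+1)/2`,
`x_t - x_s = A_t⁻¹ • ∑_{s<i≤t} i • (w_i - x_s)`, and each `w_i - x_s` has norm at most `D`
because `x_s` lies in the convex hull of `K`, so `‖x_t - x_{t-k}‖ ≤ 2Dk/t`. Going from
`x_{t-1-τ_{t-1}}` to `x_{t-τ_t}` through `x_{t-1}` and `x_t`, L-smoothness turns these three
increments into the gradient bound, and the noise enters through the triangle inequality.
-/

open Finset

section CenterMass

variable {ι E : Type*} [NormedAddCommGroup E] [NormedSpace ℝ E]

theorem norm_centerMass_sub_le {s : Finset ι} {c : ι → ℝ} {z : ι → E} {u : E} {D : ℝ}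
    (hc : ∀ i ∈ s, 0 ≤ c i) (hs : 0 < ∑ i ∈ s, c i) (hz : ∀ i ∈ s, ‖z i - u‖ ≤ D) :
    ‖s.centerMass c z - u‖ ≤ D := by
  simpa [dist_eq_norm] using (convex_closedBall u D).centerMass_mem hc hs
    (fun i hi => by simpa [dist_eq_norm] using hz i hi)

theorem norm_centerMass_union_sub_le [DecidableEq ι] {a b : Finset ι} {c : ι → ℝ} {z : ι → E}
    {D : ℝ} (hab : Disjoint a b) (hc : ∀ i ∈ a ∪ b, 0 ≤ c i) (ha : 0 < ∑ i ∈ a, c i)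
    (hz : ∀ i ∈ a ∪ b, ∀ j ∈ a ∪ b, ‖z i - z j‖ ≤ D) :
    ‖(a ∪ b).centerMass c z - a.centerMass c z‖ ≤ (∑ i ∈ b, c i) / (∑ i ∈ a ∪ b, c i) * D := by
  have hm : ∑ i ∈ a, c i • z i = (∑ i ∈ a, c i) • a.centerMass c z := by
    rw [Finset.centerMass, smul_smul, mul_inv_cancel₀ ha.ne', one_smul]
  set m := a.centerMass c z
  have hC : 0 ≤ ∑ i ∈ a ∪ b, c i := sum_nonneg hc
  have hshift : (a ∪ b).centerMass c z - m = (∑ i ∈ a ∪ b, c i)⁻¹ • ∑ i ∈ b, c i • (z i - m) := by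
    rw [show (a ∪ b).centerMass c z = (∑ i ∈ a ∪ b, c i)⁻¹ • ∑ i ∈ a ∪ b, c i • z i from rfl,
      sum_union hab, sum_union hab, hm]
    have hb : 0 ≤ ∑ i ∈ b, c i := sum_nonneg fun i hi => hc i (mem_union_right a hi)
    have : ∑ i ∈ a, c i + ∑ i ∈ b, c i ≠ 0 := by positivity
    simp only [smul_sub, sum_sub_distrib, ← sum_smul]
    match_scalars <;> field_simp; ring
  have hdist : ∀ i ∈ b, ‖c i • (z i - m)‖ ≤ c i * D := fun i hi => by
    rw [norm_smul, Real.norm_of_nonneg (hc i (mem_union_right a hi)), ← norm_neg, neg_sub]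
    exact mul_le_mul_of_nonneg_left
      (norm_centerMass_sub_le (fun j hj => hc j (mem_union_left b hj)) ha
        fun j hj => hz j (mem_union_left b hj) i (mem_union_right a hi))
      (hc i (mem_union_right a hi))
  calc ‖(a ∪ b).centerMass c z - m‖
      ≤ (∑ i ∈ a ∪ b, c i)⁻¹ * ∑ i ∈ b, c i * D := by
        rw [hshift, norm_smul, Real.norm_of_nonneg (inv_nonneg.2 hC)]
        exact mul_le_mul_of_nonneg_left ((norm_sum_le _ _).trans (sum_le_sum hdist))
          (inv_nonneg.2 hC)
    _ = (∑ i ∈ b, c i) / (∑ i ∈ a ∪ b, c i) * D := by rw [← sum_mul]; ring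

end CenterMass

section AnytimeAverage

variable {E : Type*} [NormedAddCommGroup E] [NormedSpace ℝ E]

noncomputable def anytimeAvg (w : ℕ → E) (t : ℕ) : E :=
  (Icc 1 t).centerMass (fun i => (i : ℝ)) w

theorem sum_Icc_one_natCast (t : ℕ) : ∑ i ∈ Icc 1 t, (i : ℝ) = t * (t + 1) / 2 := by
  induction t with
  | zero => simp
  | succ n ih =>
    rw [sum_Icc_succ_top (by omega), ih]
    push_cast; ring

theorem anytimeAvg_eq (w : ℕ → E) (t : ℕ) :
    anytimeAvg w t = ((t * (t + 1) : ℝ) / 2)⁻¹ • ∑ i ∈ Icc 1 t, (i : ℝ) • w i := by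
  rw [anytimeAvg, centerMass, sum_Icc_one_natCast]

theorem norm_anytimeAvg_sub_le {K : Set E} {D : ℝ} (hK : ∀ u ∈ K, ∀ v ∈ K, ‖u - v‖ ≤ D)
    {w : ℕ → E} {t k : ℕ} (hw : ∀ i ∈ Icc 1 t, w i ∈ K) (hk : k < t) :
    ‖anytimeAvg w t - anytimeAvg w (t - k)‖ ≤ 2 * D * k / t := by
  have hsplit : Icc 1 t = Icc 1 (t - k) ∪ Ioc (t - k) t := by
    ext i; simp only [mem_union, mem_Icc, mem_Ioc]; omega
  have hdisj : Disjoint (Icc 1 (t - k)) (Ioc (t - k) t) :=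
    disjoint_left.2 fun i hi hi' => by simp only [mem_Icc, mem_Ioc] at hi hi'; omega
  have hwt : w t ∈ K := hw t (by simp; omega)
  have hD : 0 ≤ D := (norm_nonneg _).trans (hK _ hwt _ hwt)
  have hsum : ∑ i ∈ Ioc (t - k) t, (i : ℝ)
      = t * (t + 1) / 2 - (t - k : ℕ) * ((t - k : ℕ) + 1) / 2 := by
    rw [← sum_Icc_one_natCast, ← sum_Icc_one_natCast, hsplit, sum_union hdisj]; ring
  have hbound := norm_centerMass_union_sub_le (c := fun i : ℕ => (i : ℝ)) (z := w) (D := D) hdisj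
    (fun i _ => Nat.cast_nonneg i)
    (by rw [sum_Icc_one_natCast]; have : (1 : ℝ) ≤ (t - k : ℕ) := by norm_cast; omega
        positivity)
    (by rw [← hsplit]; exact fun i hi j hj => hK _ (hw i hi) _ (hw j hj))
  rw [← hsplit, ← anytimeAvg, ← anytimeAvg, hsum, sum_Icc_one_natCast,
    Nat.cast_sub hk.le] at hbound
  refine hbound.trans ?_
  have ht : (0 : ℝ) < t := by norm_cast; omega
  rw [div_mul_eq_mul_div, div_le_div_iff₀ (by positivity) ht]
  nlinarith [mul_nonneg (mul_nonneg hD (Nat.cast_nonneg k : (0 : ℝ) ≤ k)) ht.le]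

theorem norm_anytimeAvg_delayed_sub_le {K : Set E} {D : ℝ}
    (hK : ∀ u ∈ K, ∀ v ∈ K, ‖u - v‖ ≤ D) {w : ℕ → E} {t a b : ℕ}
    (hw : ∀ i ∈ Icc 1 t, w i ∈ K) (ha : a < t - 1) (hb : b < t) :
    ‖anytimeAvg w (t - 1 - a) - anytimeAvg w (t - b)‖
      ≤ 2 * D * a / ((t : ℝ) - 1) + 2 * D / t + 2 * D * b / t := by
  have hw' : ∀ i ∈ Icc 1 (t - 1), w i ∈ K := fun i hi => hw i (by simp at hi ⊢; omega)
  have h₁ := norm_anytimeAvg_sub_le hK hw' ha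
  have h₂ := norm_anytimeAvg_sub_le hK hw (k := 1) (by omega)
  have h₃ := norm_anytimeAvg_sub_le hK hw hb
  rw [Nat.cast_pred (by omega), norm_sub_rev] at h₁
  rw [norm_sub_rev, Nat.cast_one, mul_one] at h₂
  have := norm_sub_le_norm_sub_add_norm_sub
    (anytimeAvg w (t - 1 - a)) (anytimeAvg w (t - 1)) (anytimeAvg w (t - b))
  have := norm_sub_le_norm_sub_add_norm_sub
    (anytimeAvg w (t - 1)) (anytimeAvg w t) (anytimeAvg w (t - b))
  linarith

end AnytimeAverage

theorem stmt_9_general {d T : ℕ} (K : Set (EuclideanSpace ℝ (Fin d))) (D L : ℝ) (hL0 : 0 ≤ L)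
    (hD : ∀ u ∈ K, ∀ v ∈ K, ‖u - v‖ ≤ D)
    (f : EuclideanSpace ℝ (Fin d) → ℝ)
    (hL : ∀ x y : EuclideanSpace ℝ (Fin d), ‖gradient f x - gradient f y‖ ≤ L * ‖x - y‖)
    (w x : ℕ → EuclideanSpace ℝ (Fin d))
    (hw : ∀ t ∈ Icc 1 T, w t ∈ K)
    (hx : ∀ t ∈ Icc 1 T, x t = ((t * (t + 1) : ℝ) / 2)⁻¹ • ∑ i ∈ Icc 1 t, (i : ℝ) • w i)
    (τ : ℕ → ℕ) (hτ : ∀ t ∈ Icc 1 T, τ t ≤ t - 1)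
    (ξ : ℕ → EuclideanSpace ℝ (Fin d)) :
    ∀ t : ℕ, 2 ≤ t → t ≤ T →
      ‖(gradient f (x (t - 1 - τ (t - 1))) + ξ (t - 1)) - (gradient f (x (t - τ t)) + ξ t)‖ ≤
        2 * L * D / ((t : ℝ) - 1) + 8 * L * D * τ (t - 1) / ((t : ℝ) - 1)
          + 8 * L * D * τ t / t + ‖ξ t‖ + ‖ξ (t - 1)‖ := by
  intro t ht2 htT
  have hτt := hτ t (by simp; omega)
  have hτp := hτ (t - 1) (by simp; omega)
  have hwt : ∀ i ∈ Icc 1 t, w i ∈ K := fun i hi => hw i (by simp at hi ⊢; omega)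
  have hD0 : 0 ≤ D := (norm_nonneg _).trans (hD _ (hw t (by simp; omega)) _ (hw t (by simp; omega)))
  have ht : (1 : ℝ) < t := by norm_cast
  have hdist : ‖x (t - 1 - τ (t - 1)) - x (t - τ t)‖
      ≤ 2 * D / ((t : ℝ) - 1) + 8 * D * τ (t - 1) / ((t : ℝ) - 1) + 8 * D * τ t / t := by
    rw [hx _ (by simp; omega), hx _ (by simp; omega), ← anytimeAvg_eq, ← anytimeAvg_eq]
    refine (norm_anytimeAvg_delayed_sub_le hD hwt (by omega) (by omega)).trans ?_
    have : 2 * D / (t : ℝ) ≤ 2 * D / ((t : ℝ) - 1) := by gcongr; linarith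
    have : 2 * D * τ (t - 1) / ((t : ℝ) - 1) ≤ 8 * D * τ (t - 1) / ((t : ℝ) - 1) := by
      gcongr; linarith
    have : 2 * D * τ t / (t : ℝ) ≤ 8 * D * τ t / t := by gcongr; linarith
    linarith
  calc ‖(gradient f (x (t - 1 - τ (t - 1))) + ξ (t - 1)) - (gradient f (x (t - τ t)) + ξ t)‖
      = ‖(gradient f (x (t - 1 - τ (t - 1))) - gradient f (x (t - τ t)))
          + (ξ (t - 1) - ξ t)‖ := by
        congr 1; abel
    _ ≤ L * ‖x (t - 1 - τ (t - 1)) - x (t - τ t)‖ + (‖ξ t‖ + ‖ξ (t - 1)‖) :=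
        norm_add_le_of_le (hL _ _) ((norm_sub_le _ _).trans_eq (add_comm _ _))
    _ ≤ L * (2 * D / ((t : ℝ) - 1) + 8 * D * τ (t - 1) / ((t : ℝ) - 1) + 8 * D * τ t / t)
          + (‖ξ t‖ + ‖ξ (t - 1)‖) := by
        gcongr
    _ = _ := by ring

/-- Bound on the distance between the optimistic hint
`M_{t-τ_t} = ∇f(x_{t-1-τ_{t-1}}) + ξ_{t-1}` and the delayed stochastic gradient
`g_{t-τ_t} = ∇f(x_{t-τ_t}) + ξ_t`, for the anytime averages `x_t` with weights `α_t = t`. -/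
theorem stmt_9 {d T : ℕ} (K : Set (EuclideanSpace ℝ (Fin d))) (D L : ℝ) (hL0 : 0 ≤ L)
    (hD : ∀ u ∈ K, ∀ v ∈ K, ‖u - v‖ ≤ D)
    (f : EuclideanSpace ℝ (Fin d) → ℝ) (hdiff : Differentiable ℝ f)
    (hL : ∀ x y : EuclideanSpace ℝ (Fin d), ‖gradient f x - gradient f y‖ ≤ L * ‖x - y‖)
    (w x : ℕ → EuclideanSpace ℝ (Fin d))
    (hw : ∀ t ∈ Icc 1 T, w t ∈ K)
    (hx : ∀ t ∈ Icc 1 T, x t = ((t * (t + 1) : ℝ) / 2)⁻¹ • ∑ i ∈ Icc 1 t, (i : ℝ) • w i)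
    (τ : ℕ → ℕ) (hτ : ∀ t ∈ Icc 1 T, τ t ≤ t - 1)
    (ξ : ℕ → EuclideanSpace ℝ (Fin d)) :
    ∀ t : ℕ, 2 ≤ t → t ≤ T →
      ‖(gradient f (x (t - 1 - τ (t - 1))) + ξ (t - 1)) - (gradient f (x (t - τ t)) + ξ t)‖ ≤
        2 * L * D / ((t : ℝ) - 1) + 8 * L * D * τ (t - 1) / ((t : ℝ) - 1)
          + 8 * L * D * τ t / t + ‖ξ t‖ + ‖ξ (t - 1)‖ :=
  stmt_9_general K D L hL0 hD f hL w x hw hx τ hτ ξ
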